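/- Let K be a compact subset of the open right half-plane {z ∈ ℂ : Re z > 0}. Then there exists M > 0 such that for every z ∈ K, every real c ≥ 0 and every integer n ≥ 0, |φ_n(z;c)| < M · u^{n/2}/Γ(1 + n/2), where u := |z|²/Re z. -/

import Mathlib

/-!
On `τ > c ≥ 0` the integrand of `φ_n(z;c)` is dominated by `τ^{n+2} e^{-τ²/(4u)}`, because
`Re(1/z) = Re z/|z|² = 1/u`. The Gaussian moment `∫_0^∞ τ^{n+2} e^{-τ²/(4u)} dτ` is
`(4u)^{(n+3)/2} Γ((n+3)/2)/2`, and Legendre's duplication formula rewrites `Γ((n+3)/2)` as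
`2^{-(n+1)} √π (n+1)!/Γ(1+n/2)`, which cancels the normalisation of `φ_n` and leaves
`|φ_n(z;c)| ≤ (|z|/Re z)^{3/2} u^{n/2}/Γ(1+n/2)`. The prefactor is continuous, hence bounded,
on `K`.
-/

open MeasureTheory Real Set
open scoped Nat

/-- `φ_n(z;c) = z^{-3/2}/(2√π (n+1)!) ∫_c^∞ e^{-τ²/(4z)} τ (τ-c)^{n+1} dτ` for complex `z`
(principal branch of `z^{-3/2}`). -/
noncomputable def phiC (n : ℕ) (c : ℝ) (z : ℂ) : ℂ :=
  z ^ (-(3 : ℂ) / 2) / (2 * (Real.sqrt Real.pi : ℂ) * (Nat.factorial (n + 1) : ℂ)) *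
    ∫ τ in Set.Ioi c, Complex.exp (-(τ : ℂ) ^ 2 / (4 * z)) * (τ : ℂ) * ((τ : ℂ) - (c : ℂ)) ^ (n + 1)

lemma Real.Gamma_one_add_half_mul_Gamma_add_three_halves (n : ℕ) :
    Gamma (1 + n / 2) * Gamma ((n + 3) / 2) * 2 ^ (n + 1) = (n + 1)! * √π := by
  have h := Gamma_mul_Gamma_add_half (1 + n / 2)
  rw [show (1 + n / 2 + 1 / 2 : ℝ) = (n + 3) / 2 by ring,
    show 2 * (1 + n / 2 : ℝ) = (n + 1 : ℕ) + 1 by push_cast; ring, Gamma_nat_eq_factorial,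
    show (1 : ℝ) - ((n + 1 : ℕ) + 1) = -(n + 1 : ℕ) by push_cast; ring,
    rpow_neg zero_le_two, rpow_natCast] at h
  rw [h]
  field_simp

lemma integral_pow_mul_exp_neg_sq_div_four_mul (n : ℕ) {u : ℝ} (hu : 0 < u) :
    ∫ τ in Ioi (0 : ℝ), τ ^ (n + 2) * exp (-τ ^ 2 / (4 * u)) =
      2 * √π * (n + 1)! * u ^ (((n : ℝ) + 3) / 2) / Gamma (1 + n / 2) := by
  have h := integral_rpow_mul_exp_neg_mul_rpow two_pos
    (neg_one_lt_zero.trans_le (Nat.cast_nonneg (n + 2))) (inv_pos.2 (mul_pos four_pos hu))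
  have hpow : (4 * u)⁻¹ ^ (-((n + 2 : ℕ) + 1 : ℝ) / 2) =
      2 ^ (n + 3) * u ^ (((n : ℝ) + 3) / 2) := by
    rw [inv_rpow (by positivity), ← rpow_neg (by positivity), mul_rpow zero_le_four hu.le,
      show (4 : ℝ) = 2 ^ (2 : ℝ) by norm_num, ← rpow_mul zero_le_two, ← rpow_natCast]
    push_cast
    ring_nf
  simp only [rpow_natCast, rpow_two, neg_mul, hpow] at h
  simp only [neg_div, div_eq_inv_mul (_ ^ 2)]
  rw [h, show ((n + 2 : ℕ) + 1 : ℝ) / 2 = (n + 3) / 2 by push_cast; ring,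
    eq_div_iff (by positivity)]
  linear_combination (2 * u ^ (((n : ℝ) + 3) / 2)) *
    Gamma_one_add_half_mul_Gamma_add_three_halves n

lemma Complex.re_neg_sq_div_four_mul (τ : ℝ) (z : ℂ) :
    (-(τ : ℂ) ^ 2 / (4 * z)).re = -τ ^ 2 / (4 * (‖z‖ ^ 2 / z.re)) := by
  rw [Complex.div_re, Complex.normSq_eq_norm_sq]
  simp only [← Complex.ofReal_pow, ← Complex.ofReal_neg, Complex.ofReal_re, Complex.ofReal_im,
    Complex.mul_re, Complex.mul_im, Complex.re_ofNat, Complex.im_ofNat, Complex.norm_mul,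
    Complex.norm_ofNat, zero_mul, sub_zero, add_zero, zero_div]
  field_simp

lemma norm_phiC_integrand_le {c τ : ℝ} (hc : 0 ≤ c) (hτ : c < τ) (z : ℂ) (n : ℕ) :
    ‖Complex.exp (-(τ : ℂ) ^ 2 / (4 * z)) * τ * ((τ : ℂ) - c) ^ (n + 1)‖ ≤
      τ ^ (n + 2) * exp (-τ ^ 2 / (4 * (‖z‖ ^ 2 / z.re))) := by
  have hτ0 : 0 < τ := hc.trans_lt hτ
  rw [norm_mul, norm_mul, Complex.norm_exp, Complex.re_neg_sq_div_four_mul, norm_pow,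
    ← Complex.ofReal_sub, Complex.norm_real, Complex.norm_real, norm_of_nonneg hτ0.le,
    norm_of_nonneg (sub_nonneg.2 hτ.le)]
  calc exp _ * τ * (τ - c) ^ (n + 1)
      ≤ exp (-τ ^ 2 / (4 * (‖z‖ ^ 2 / z.re))) * τ * τ ^ (n + 1) := by gcongr; linarith
    _ = _ := by ring

lemma norm_phiC_integral_le {c : ℝ} (hc : 0 ≤ c) {z : ℂ} (hz : 0 < z.re) (n : ℕ) :
    ‖∫ τ in Ioi c, Complex.exp (-(τ : ℂ) ^ 2 / (4 * z)) * τ * ((τ : ℂ) - c) ^ (n + 1)‖ ≤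
      ∫ τ in Ioi (0 : ℝ), τ ^ (n + 2) * exp (-τ ^ 2 / (4 * (‖z‖ ^ 2 / z.re))) := by
  have hb : 0 < (4 * (‖z‖ ^ 2 / z.re))⁻¹ := by
    have := Complex.ne_zero_of_re_pos hz
    positivity
  have hint : IntegrableOn (fun τ : ℝ => τ ^ (n + 2) * exp (-τ ^ 2 / (4 * (‖z‖ ^ 2 / z.re))))
      (Ioi 0) := by
    simpa only [rpow_natCast, neg_mul, neg_div, div_eq_inv_mul (_ ^ 2)] using
      integrableOn_rpow_mul_exp_neg_mul_sq hb (neg_one_lt_zero.trans_le (Nat.cast_nonneg (n + 2)))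
  calc _ ≤ ∫ τ in Ioi c, τ ^ (n + 2) * exp (-τ ^ 2 / (4 * (‖z‖ ^ 2 / z.re))) :=
        norm_integral_le_of_norm_le (hint.mono_set (Ioi_subset_Ioi hc)) <|
          (ae_restrict_mem measurableSet_Ioi).mono fun τ hτ => norm_phiC_integrand_le hc hτ z n
    _ ≤ _ := setIntegral_mono_set hint
        ((ae_restrict_mem measurableSet_Ioi).mono fun τ (hτ : 0 < τ) =>
          mul_nonneg (pow_nonneg hτ.le _) (exp_pos _).le)
        (Ioi_subset_Ioi hc).eventuallyLE

lemma norm_phiC_le {z : ℂ} (hz : 0 < z.re) {c : ℝ} (hc : 0 ≤ c) (n : ℕ) :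
    ‖phiC n c z‖ ≤
      (‖z‖ / z.re) ^ ((3 : ℝ) / 2) * ((‖z‖ ^ 2 / z.re) ^ ((n : ℝ) / 2) / Gamma (1 + n / 2)) := by
  have hz0 : 0 < ‖z‖ := norm_pos_iff.2 (Complex.ne_zero_of_re_pos hz)
  have hu : 0 < ‖z‖ ^ 2 / z.re := by positivity
  have hprefactor : ‖z ^ (-(3 : ℂ) / 2) / (2 * (√π : ℂ) * ((n + 1)! : ℂ))‖ =
      ‖z‖ ^ (-(3 : ℝ) / 2) / (2 * √π * (n + 1)!) := by
    rw [norm_div, show -(3 : ℂ) / 2 = ((-(3 : ℝ) / 2 : ℝ) : ℂ) by push_cast; ring,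
      Complex.norm_cpow_real]
    simp [abs_of_nonneg (sqrt_nonneg π)]
  have hscale : ‖z‖ ^ (-(3 : ℝ) / 2) * (‖z‖ ^ 2 / z.re) ^ ((3 : ℝ) / 2) =
      (‖z‖ / z.re) ^ ((3 : ℝ) / 2) := by
    rw [neg_div, rpow_neg hz0.le, ← div_eq_inv_mul, ← div_rpow hu.le hz0.le]
    congr 1
    field_simp
  calc ‖phiC n c z‖
      ≤ ‖z‖ ^ (-(3 : ℝ) / 2) / (2 * √π * (n + 1)!) *
          ∫ τ in Ioi (0 : ℝ), τ ^ (n + 2) * exp (-τ ^ 2 / (4 * (‖z‖ ^ 2 / z.re))) := by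
        rw [phiC, norm_mul, hprefactor]
        gcongr
        exact norm_phiC_integral_le hc hz n
    _ = _ := by
        rw [integral_pow_mul_exp_neg_sq_div_four_mul n hu, add_div, rpow_add hu, ← hscale]
        field_simp

/-- On a compact subset `K` of the open right half-plane there is `M > 0` with
`|φ_n(z;c)| < M u^{n/2}/Γ(1 + n/2)` for all `z ∈ K`, `c ≥ 0`, `n ≥ 0`, where
`u = |z|²/Re z`. -/
theorem phiC_uniform_bound_on_compacts
    (K : Set ℂ) (hK : IsCompact K) (hKsub : K ⊆ {z : ℂ | 0 < z.re}) :
    ∃ M > (0 : ℝ), ∀ z ∈ K, ∀ c : ℝ, 0 ≤ c → ∀ n : ℕ,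
      ‖phiC n c z‖ < M * (‖z‖ ^ 2 / z.re) ^ ((n : ℝ) / 2) / Real.Gamma (1 + (n : ℝ) / 2) := by
  have hcont : ContinuousOn (fun z : ℂ => (‖z‖ / z.re) ^ ((3 : ℝ) / 2)) K :=
    (continuous_norm.continuousOn.div Complex.continuous_re.continuousOn
      fun z hz => (hKsub hz).ne').rpow_const fun _ _ => Or.inr (by norm_num)
  obtain ⟨B, hB⟩ := hK.exists_bound_of_continuousOn hcont
  refine ⟨max B 0 + 1, by positivity, fun z hz c hc n => ?_⟩
  have hzre : 0 < z.re := hKsub hz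
  have hu : 0 < (‖z‖ ^ 2 / z.re) ^ ((n : ℝ) / 2) / Gamma (1 + n / 2) := by
    have := norm_pos_iff.2 (Complex.ne_zero_of_re_pos hzre)
    positivity
  calc ‖phiC n c z‖
      ≤ (‖z‖ / z.re) ^ ((3 : ℝ) / 2) * ((‖z‖ ^ 2 / z.re) ^ ((n : ℝ) / 2) / Gamma (1 + n / 2)) :=
        norm_phiC_le hzre hc n
    _ < (max B 0 + 1) * ((‖z‖ ^ 2 / z.re) ^ ((n : ℝ) / 2) / Gamma (1 + n / 2)) := by
        gcongr
        linarith [le_max_left B 0, le_norm_self ((‖z‖ / z.re) ^ ((3 : ℝ) / 2)), hB z hz]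
    _ = _ := by ring
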